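/- Let σ = (√5 − 1)/2 and define S_n = σ^(n−3)·((n+1)σ + 1). Then S_6 > 1 and S_7 < 1. -/

import Mathlib

/-! Since σ² = 1 − σ, every power of σ is an affine function of σ, which turns S 6 and S 7 into
13 − 19σ and 37σ − 22. Both inequalities then amount to upper bounds on σ, and σ < x follows from
1 < x² + x because t ↦ t² + t is increasing on [0, ∞) and takes the value 1 at σ. -/

noncomputable def σ : ℝ := (Real.sqrt 5 - 1) / 2

noncomputable def S (n : ℕ) : ℝ := σ ^ ((n : ℤ) - 3) * (((n : ℝ) + 1) * σ + 1)

lemma σ_pos : 0 < σ := by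
  have : 1 < Real.sqrt 5 := by
    rw [show (1 : ℝ) = Real.sqrt 1 by simp]
    exact Real.sqrt_lt_sqrt zero_le_one (by norm_num)
  unfold σ
  linarith

lemma σ_sq_add_σ : σ ^ 2 + σ = 1 := by
  have h5 : Real.sqrt 5 ^ 2 = 5 := Real.sq_sqrt (by norm_num)
  unfold σ
  linear_combination h5 / 4

lemma σ_lt_of_one_lt_sq_add {x : ℝ} (hx : 0 ≤ x) (h : 1 < x ^ 2 + x) : σ < x := by
  nlinarith [σ_sq_add_σ, σ_pos]

lemma S_six : S 6 = 13 - 19 * σ := by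
  norm_num [S]
  linear_combination (7 * σ ^ 2 - 6 * σ + 13) * σ_sq_add_σ

lemma S_seven : S 7 = 37 * σ - 22 := by
  norm_num [S]
  linear_combination (8 * σ ^ 3 - 7 * σ ^ 2 + 15 * σ - 22) * σ_sq_add_σ

theorem stmt_11 : S 6 > 1 ∧ S 7 < 1 := by
  have hσ₁ : σ < 12 / 19 := σ_lt_of_one_lt_sq_add (by norm_num) (by norm_num)
  have hσ₂ : σ < 23 / 37 := σ_lt_of_one_lt_sq_add (by norm_num) (by norm_num)
  rw [S_six, S_seven]
  constructor <;> linarith
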